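/- Let A, B, C be smooth functions of (x¹,x²,x³) and D a smooth function of (x¹,x²,x³,x⁴) such that A ∂₁ + B ∂₂ + C ∂₃ + D ∂₄ is an infinitesimal automorphism of the Engel flag, all regarded as functions on ℝ⁵, and let E : ℝ⁵ → ℝ be smooth. Then ξ = A ∂₁ + B ∂₂ + C ∂₃ + D ∂₄ + E ∂₅ is an infinitesimal automorphism of the exceptional Cartan flag of length three if and only if E = x⁵·(η − ∂D/∂x⁴), where η = (∂A/∂x¹ + x⁵ ∂D/∂x¹) − x³(∂A/∂x² + x⁵ ∂D/∂x²) − x⁴(∂A/∂x³ + x⁵ ∂D/∂x³). In particular the prolongation is unique. -/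

import Mathlib

open scoped BigOperators

noncomputable section

/-- The coordinate 1-form `dxⁱ` on `ℝⁿ` (as a constant continuous linear functional). -/
def dxi {n : ℕ} (i : Fin n) : (Fin n → ℝ) →L[ℝ] ℝ := ContinuousLinearMap.proj i

/-- The Lie derivative `θ(ξ)ω = d(ι(ξ)ω) + ι(ξ)(dω)` of a 1-form `ω` along a vector
field `ξ`, evaluated at the point `x` on the tangent vector `v`.  Here
`ι(ξ)ω : x ↦ ω_x(ξ x)`, `d` of a function is `fderiv`, and
`(dω)_x(u,v) = (D_u ω)(v) − (D_v ω)(u)`. -/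
def lieD {n : ℕ} (ξ : (Fin n → ℝ) → (Fin n → ℝ))
    (ω : (Fin n → ℝ) → (Fin n → ℝ) →L[ℝ] ℝ) (x v : Fin n → ℝ) : ℝ :=
  fderiv ℝ (fun y => ω y (ξ y)) x v
    + ((fderiv ℝ ω x (ξ x)) v - (fderiv ℝ ω x v) (ξ x))

/-- `ξ` is an infinitesimal automorphism of the Pfaffian system spanned by the
1-forms `ω 0, …, ω (r-1)` : each Lie derivative `θ(ξ)(ω i)` lies, at every point,
in the linear span of the `ω j`. -/
def IsIA {n r : ℕ} (ω : Fin r → (Fin n → ℝ) → (Fin n → ℝ) →L[ℝ] ℝ)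
    (ξ : (Fin n → ℝ) → (Fin n → ℝ)) : Prop :=
  ∀ i : Fin r, ∀ x : Fin n → ℝ, ∃ c : Fin r → ℝ,
    ∀ v : Fin n → ℝ, lieD ξ (ω i) x v = ∑ j, c j * ω j x v

/-- The partial derivative `∂f/∂xⁱ`. -/
def pd {n : ℕ} (i : Fin n) (f : (Fin n → ℝ) → ℝ) : (Fin n → ℝ) → ℝ :=
  fun x => fderiv ℝ f x (Pi.single i 1)

/-- The Darboux contact form `ω = dx² + x³dx¹` on `ℝ³`. -/
def darboux (x : Fin 3 → ℝ) : (Fin 3 → ℝ) →L[ℝ] ℝ := dxi 1 + x 2 • dxi 0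


/-- The Engel flag on `ℝ⁴`, generated by `ω¹ = dx² + x³dx¹` and `ω² = dx³ + x⁴dx¹`. -/
def engel : Fin 2 → (Fin 4 → ℝ) → (Fin 4 → ℝ) →L[ℝ] ℝ :=
  ![fun x => dxi 1 + x 2 • dxi 0, fun x => dxi 2 + x 3 • dxi 0]

/-- Projection `ℝ⁴ → ℝ³` onto the first three coordinates. -/
def p43 (x : Fin 4 → ℝ) : Fin 3 → ℝ := fun i => x (Fin.castLE (by norm_num) i)

/-- The homogeneous Cartan flag of length three on `ℝ⁵`, generated by
`ω¹ = dx² + x³dx¹`, `ω² = dx³ + x⁴dx¹`, `ω³ = dx⁴ + x⁵dx¹`. -/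
def cartan : Fin 3 → (Fin 5 → ℝ) → (Fin 5 → ℝ) →L[ℝ] ℝ :=
  ![fun x => dxi 1 + x 2 • dxi 0, fun x => dxi 2 + x 3 • dxi 0,
    fun x => dxi 3 + x 4 • dxi 0]

/-- Projection `ℝ⁵ → ℝ³` onto the first three coordinates. -/
def p53 (x : Fin 5 → ℝ) : Fin 3 → ℝ := fun i => x (Fin.castLE (by norm_num) i)

/-- Projection `ℝ⁵ → ℝ⁴` onto the first four coordinates. -/
def p54 (x : Fin 5 → ℝ) : Fin 4 → ℝ := fun i => x (Fin.castLE (by norm_num) i)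

/-- The exceptional Cartan flag of length three on `ℝ⁵`, generated by
`ϖ¹ = dx² + x³dx¹`, `ϖ² = dx³ + x⁴dx¹`, `ϖ³ = dx¹ + x⁵dx⁴`. -/
def cartanE : Fin 3 → (Fin 5 → ℝ) → (Fin 5 → ℝ) →L[ℝ] ℝ :=
  ![fun x => dxi 1 + x 2 • dxi 0, fun x => dxi 2 + x 3 • dxi 0,
    fun x => dxi 0 + x 4 • dxi 3]

-- helpers
def pcast {m n : ℕ} (h : m ≤ n) : (Fin n → ℝ) →L[ℝ] (Fin m → ℝ) :=
  ContinuousLinearMap.pi fun i => ContinuousLinearMap.proj (Fin.castLE h i)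

lemma fderiv_apply_eq_sum {n : ℕ} (f : (Fin n → ℝ) → ℝ) (z w : Fin n → ℝ) :
    fderiv ℝ f z w = ∑ i, w i * pd i f z := by
  have hw : w = ∑ i, w i • (Pi.single i 1 : Fin n → ℝ) := by
    funext j
    simp [Finset.sum_apply, Pi.single_apply]
  calc fderiv ℝ f z w = fderiv ℝ f z (∑ i, w i • (Pi.single i 1 : Fin n → ℝ)) := by
        rw [← hw]
  _ = ∑ i, w i * pd i f z := by
      rw [map_sum]
      simp [pd, smul_eq_mul]

lemma lieD_form {n : ℕ} (a b c : Fin n) (ξ : (Fin n → ℝ) → (Fin n → ℝ))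
    (x v : Fin n → ℝ)
    (ha : DifferentiableAt ℝ (fun y => ξ y a) x)
    (hc : DifferentiableAt ℝ (fun y => ξ y c) x) :
    lieD ξ (fun y => dxi a + y b • dxi c) x v
      = fderiv ℝ (fun y => ξ y a) x v + x b * fderiv ℝ (fun y => ξ y c) x v
        + ξ x b * v c := by
  have hb : DifferentiableAt ℝ (fun y : Fin n → ℝ => y b) x :=
    (ContinuousLinearMap.proj b : (Fin n → ℝ) →L[ℝ] ℝ).differentiableAt
  have hfb : fderiv ℝ (fun y : Fin n → ℝ => y b) x
      = (ContinuousLinearMap.proj b : (Fin n → ℝ) →L[ℝ] ℝ) :=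
    (ContinuousLinearMap.proj b : (Fin n → ℝ) →L[ℝ] ℝ).fderiv
  have hD : fderiv ℝ (fun y : Fin n → ℝ => dxi a + y b • dxi c) x
      = (ContinuousLinearMap.proj b : (Fin n → ℝ) →L[ℝ] ℝ).smulRight (dxi c) := by
    rw [show (fun y : Fin n → ℝ => dxi a + y b • dxi c)
        = fun y => dxi a + ((ContinuousLinearMap.proj b :
            (Fin n → ℝ) →L[ℝ] ℝ).smulRight (dxi c)) y from rfl,
      fderiv_const_add, ContinuousLinearMap.fderiv]
  rw [lieD, show (fun y => (dxi a + y b • dxi c) (ξ y))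
      = fun y => ξ y a + y b * ξ y c from rfl, hD,
    fderiv_fun_add ha (hb.fun_mul hc), fderiv_fun_mul hb hc]
  simp only [ContinuousLinearMap.add_apply, ContinuousLinearMap.smulRight_apply,
    ContinuousLinearMap.smul_apply, smul_eq_mul, hfb, ContinuousLinearMap.proj_apply,
    dxi, ContinuousLinearMap.coe_smul', Pi.smul_apply]
  ring

lemma fderiv_comp_pcast {m n : ℕ} (h : m ≤ n) (f : (Fin m → ℝ) → ℝ)
    (hf : Differentiable ℝ f) (x v : Fin n → ℝ) :
    fderiv ℝ (fun y => f (pcast h y)) x v = fderiv ℝ f (pcast h x) (pcast h v) := by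
  rw [show (fun y => f (pcast h y)) = f ∘ ⇑(pcast h) from rfl,
      fderiv_comp x (hf.differentiableAt) (pcast h).differentiableAt,
      ContinuousLinearMap.fderiv]
  rfl

lemma pd_contDiff {m : ℕ} (i : Fin m) (f : (Fin m → ℝ) → ℝ) (hf : ContDiff ℝ (⊤ : ℕ∞) f) :
    ContDiff ℝ (⊤ : ℕ∞) (pd i f) :=
  (hf.fderiv_right (by simp)).clm_apply contDiff_const

lemma key (A B C : (Fin 3 → ℝ) → ℝ) (D : (Fin 4 → ℝ) → ℝ)
    (hA : ContDiff ℝ (⊤ : ℕ∞) A) (hB : ContDiff ℝ (⊤ : ℕ∞) B) (hC : ContDiff ℝ (⊤ : ℕ∞) C)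
    (hD : ContDiff ℝ (⊤ : ℕ∞) D)
    (hIA : IsIA engel (fun x => ![A (p43 x), B (p43 x), C (p43 x), D x]))
    (E : (Fin 5 → ℝ) → ℝ) :
    (IsIA cartanE
        (fun x => ![A (p53 x), B (p53 x), C (p53 x), D (p54 x), E x]) ↔
      ∀ x : Fin 5 → ℝ,
        E x = x 4 * (((pd 0 A (p53 x) + x 4 * pd 0 D (p54 x))
            - x 2 * (pd 1 A (p53 x) + x 4 * pd 1 D (p54 x))
            - x 3 * (pd 2 A (p53 x) + x 4 * pd 2 D (p54 x)))
            - pd 3 D (p54 x))) := by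
  set ξ : (Fin 5 → ℝ) → (Fin 5 → ℝ) :=
    fun x => ![A (p53 x), B (p53 x), C (p53 x), D (p54 x), E x] with hξdef
  set ζ : (Fin 4 → ℝ) → (Fin 4 → ℝ) :=
    fun x => ![A (p43 x), B (p43 x), C (p43 x), D x] with hζdef
  have h35 : (3:ℕ) ≤ 5 := by norm_num
  have h34 : (3:ℕ) ≤ 4 := by norm_num
  have h45 : (4:ℕ) ≤ 5 := by norm_num
  have dA5 : Differentiable ℝ (fun y : Fin 5 → ℝ => A (p53 y)) :=
    (hA.comp (pcast h35).contDiff).differentiable (by simp)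
  have dB5 : Differentiable ℝ (fun y : Fin 5 → ℝ => B (p53 y)) :=
    (hB.comp (pcast h35).contDiff).differentiable (by simp)
  have dC5 : Differentiable ℝ (fun y : Fin 5 → ℝ => C (p53 y)) :=
    (hC.comp (pcast h35).contDiff).differentiable (by simp)
  have dD5 : Differentiable ℝ (fun y : Fin 5 → ℝ => D (p54 y)) :=
    (hD.comp (pcast h45).contDiff).differentiable (by simp)
  have dA4 : Differentiable ℝ (fun y : Fin 4 → ℝ => A (p43 y)) :=
    (hA.comp (pcast h34).contDiff).differentiable (by simp)
  have dB4 : Differentiable ℝ (fun y : Fin 4 → ℝ => B (p43 y)) :=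
    (hB.comp (pcast h34).contDiff).differentiable (by simp)
  have dC4 : Differentiable ℝ (fun y : Fin 4 → ℝ => C (p43 y)) :=
    (hC.comp (pcast h34).contDiff).differentiable (by simp)
  have dD4 : Differentiable ℝ D := hD.differentiable (by simp)
  -- transfer for i = 0
  have T0 : ∀ x v : Fin 5 → ℝ,
      lieD ξ (cartanE 0) x v = lieD ζ (engel 0) (p54 x) (p54 v) := by
    intro x v
    show lieD ξ (fun y : Fin 5 → ℝ => dxi 1 + y 2 • dxi 0) x v
      = lieD ζ (fun y : Fin 4 → ℝ => dxi 1 + y 2 • dxi 0) (p54 x) (p54 v)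
    rw [lieD_form 1 2 0 ξ x v dB5.differentiableAt dA5.differentiableAt,
        lieD_form 1 2 0 ζ (p54 x) (p54 v) dB4.differentiableAt dA4.differentiableAt,
        show fderiv ℝ (fun y => ξ y 1) x v = fderiv ℝ B (p53 x) (p53 v) from
          fderiv_comp_pcast h35 B (hB.differentiable (by simp)) x v,
        show fderiv ℝ (fun y => ξ y 0) x v = fderiv ℝ A (p53 x) (p53 v) from
          fderiv_comp_pcast h35 A (hA.differentiable (by simp)) x v,
        show fderiv ℝ (fun y => ζ y 1) (p54 x) (p54 v) = fderiv ℝ B (p53 x) (p53 v) from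
          fderiv_comp_pcast h34 B (hB.differentiable (by simp)) (p54 x) (p54 v),
        show fderiv ℝ (fun y => ζ y 0) (p54 x) (p54 v) = fderiv ℝ A (p53 x) (p53 v) from
          fderiv_comp_pcast h34 A (hA.differentiable (by simp)) (p54 x) (p54 v)]
    rfl
  -- transfer for i = 1
  have T1 : ∀ x v : Fin 5 → ℝ,
      lieD ξ (cartanE 1) x v = lieD ζ (engel 1) (p54 x) (p54 v) := by
    intro x v
    show lieD ξ (fun y : Fin 5 → ℝ => dxi 2 + y 3 • dxi 0) x v
      = lieD ζ (fun y : Fin 4 → ℝ => dxi 2 + y 3 • dxi 0) (p54 x) (p54 v)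
    rw [lieD_form 2 3 0 ξ x v dC5.differentiableAt dA5.differentiableAt,
        lieD_form 2 3 0 ζ (p54 x) (p54 v) dC4.differentiableAt dA4.differentiableAt,
        show fderiv ℝ (fun y => ξ y 2) x v = fderiv ℝ C (p53 x) (p53 v) from
          fderiv_comp_pcast h35 C (hC.differentiable (by simp)) x v,
        show fderiv ℝ (fun y => ξ y 0) x v = fderiv ℝ A (p53 x) (p53 v) from
          fderiv_comp_pcast h35 A (hA.differentiable (by simp)) x v,
        show fderiv ℝ (fun y => ζ y 2) (p54 x) (p54 v) = fderiv ℝ C (p53 x) (p53 v) from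
          fderiv_comp_pcast h34 C (hC.differentiable (by simp)) (p54 x) (p54 v),
        show fderiv ℝ (fun y => ζ y 0) (p54 x) (p54 v) = fderiv ℝ A (p53 x) (p53 v) from
          fderiv_comp_pcast h34 A (hA.differentiable (by simp)) (p54 x) (p54 v)]
    rfl
  -- the crucial Lie derivative, in polynomial form
  have L2 : ∀ x v : Fin 5 → ℝ,
      lieD ξ (cartanE 2) x v
        = (v 0 * pd 0 A (p53 x) + v 1 * pd 1 A (p53 x) + v 2 * pd 2 A (p53 x))
          + x 4 * (v 0 * pd 0 D (p54 x) + v 1 * pd 1 D (p54 x)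
              + v 2 * pd 2 D (p54 x) + v 3 * pd 3 D (p54 x))
          + E x * v 3 := by
    intro x v
    have h := lieD_form 0 4 3 ξ x v dA5.differentiableAt dD5.differentiableAt
    rw [show fderiv ℝ (fun y => ξ y 0) x v = fderiv ℝ A (p53 x) (p53 v) from
          fderiv_comp_pcast h35 A (hA.differentiable (by simp)) x v,
        show fderiv ℝ (fun y => ξ y 3) x v = fderiv ℝ D (p54 x) (p54 v) from
          fderiv_comp_pcast h45 D (hD.differentiable (by simp)) x v] at h
    rw [show cartanE 2 = (fun y : Fin 5 → ℝ => dxi 0 + y 4 • dxi 3) from rfl, h,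
        fderiv_apply_eq_sum A (p53 x) (p53 v), fderiv_apply_eq_sum D (p54 x) (p54 v),
        Fin.sum_univ_three, Fin.sum_univ_four]
    rfl
  -- sum expansion on the cartanE side
  have hsum : ∀ (c : Fin 3 → ℝ) (x v : Fin 5 → ℝ),
      ∑ j, c j * cartanE j x v
        = c 0 * (v 1 + x 2 * v 0) + c 1 * (v 2 + x 3 * v 0)
          + c 2 * (v 0 + x 4 * v 3) := by
    intro c x v
    rw [Fin.sum_univ_three]
    rfl
  -- sum expansion on the engel side
  have hsum2 : ∀ (c : Fin 2 → ℝ) (z w : Fin 4 → ℝ),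
      ∑ j, c j * engel j z w
        = c 0 * (w 1 + z 2 * w 0) + c 1 * (w 2 + z 3 * w 0) := by
    intro c z w
    rw [Fin.sum_univ_two]
    rfl
  constructor
  · intro hIAc x
    obtain ⟨c, hc⟩ := hIAc 2 x
    have e0 := hc (Pi.single 0 1)
    have e1 := hc (Pi.single 1 1)
    have e2 := hc (Pi.single 2 1)
    have e3 := hc (Pi.single 3 1)
    rw [L2, hsum] at e0 e1 e2 e3
    simp [Pi.single_apply] at e0 e1 e2 e3
    linear_combination e3 - x 4 * e0 + x 4 * x 2 * e1 + x 4 * x 3 * e2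
  · intro hE i x
    fin_cases i
    · obtain ⟨c, hc⟩ := hIA 0 (p54 x)
      refine ⟨![c 0, c 1, 0], fun v => ?_⟩
      rw [show ((⟨0, by norm_num⟩ : Fin 3)) = (0 : Fin 3) from rfl,
        T0 x v, hc (p54 v), hsum, hsum2]
      simp only [show (![c 0, c 1, 0] : Fin 3 → ℝ) 0 = c 0 from rfl,
        show (![c 0, c 1, 0] : Fin 3 → ℝ) 1 = c 1 from rfl,
        show (![c 0, c 1, 0] : Fin 3 → ℝ) 2 = 0 from rfl,
        show ∀ y : Fin 5 → ℝ, p54 y 0 = y 0 from fun _ => rfl,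
        show ∀ y : Fin 5 → ℝ, p54 y 1 = y 1 from fun _ => rfl,
        show ∀ y : Fin 5 → ℝ, p54 y 2 = y 2 from fun _ => rfl,
        show ∀ y : Fin 5 → ℝ, p54 y 3 = y 3 from fun _ => rfl]
      ring
    · obtain ⟨c, hc⟩ := hIA 1 (p54 x)
      refine ⟨![c 0, c 1, 0], fun v => ?_⟩
      rw [show ((⟨1, by norm_num⟩ : Fin 3)) = (1 : Fin 3) from rfl,
        T1 x v, hc (p54 v), hsum, hsum2]
      simp only [show (![c 0, c 1, 0] : Fin 3 → ℝ) 0 = c 0 from rfl,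
        show (![c 0, c 1, 0] : Fin 3 → ℝ) 1 = c 1 from rfl,
        show (![c 0, c 1, 0] : Fin 3 → ℝ) 2 = 0 from rfl,
        show ∀ y : Fin 5 → ℝ, p54 y 0 = y 0 from fun _ => rfl,
        show ∀ y : Fin 5 → ℝ, p54 y 1 = y 1 from fun _ => rfl,
        show ∀ y : Fin 5 → ℝ, p54 y 2 = y 2 from fun _ => rfl,
        show ∀ y : Fin 5 → ℝ, p54 y 3 = y 3 from fun _ => rfl]
      ring
    · refine ⟨![pd 1 A (p53 x) + x 4 * pd 1 D (p54 x),
        pd 2 A (p53 x) + x 4 * pd 2 D (p54 x),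
        (pd 0 A (p53 x) + x 4 * pd 0 D (p54 x))
          - x 2 * (pd 1 A (p53 x) + x 4 * pd 1 D (p54 x))
          - x 3 * (pd 2 A (p53 x) + x 4 * pd 2 D (p54 x))], fun v => ?_⟩
      rw [show ((⟨2, by norm_num⟩ : Fin 3)) = (2 : Fin 3) from rfl, L2, hsum, hE x]
      show _ = (pd 1 A (p53 x) + x 4 * pd 1 D (p54 x)) * (v 1 + x 2 * v 0)
        + (pd 2 A (p53 x) + x 4 * pd 2 D (p54 x)) * (v 2 + x 3 * v 0)
        + ((pd 0 A (p53 x) + x 4 * pd 0 D (p54 x))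
          - x 2 * (pd 1 A (p53 x) + x 4 * pd 1 D (p54 x))
          - x 3 * (pd 2 A (p53 x) + x 4 * pd 2 D (p54 x))) * (v 0 + x 4 * v 3)
      ring


/-- If `A∂₁ + B∂₂ + C∂₃ + D∂₄` is an infinitesimal automorphism of
the Engel flag, and `E : ℝ⁵ → ℝ` is smooth, then
`ξ = A∂₁ + B∂₂ + C∂₃ + D∂₄ + E∂₅` is an infinitesimal automorphism of the
exceptional Cartan flag of length three iff `E = x⁵(η − ∂D/∂x⁴)`, where
`η = (∂A/∂x¹ + x⁵∂D/∂x¹) − x³(∂A/∂x² + x⁵∂D/∂x²) − x⁴(∂A/∂x³ + x⁵∂D/∂x³)`.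
In particular the prolongation is unique. -/
theorem stmt7 (A B C : (Fin 3 → ℝ) → ℝ) (D : (Fin 4 → ℝ) → ℝ)
    (hA : ContDiff ℝ (⊤ : ℕ∞) A) (hB : ContDiff ℝ (⊤ : ℕ∞) B) (hC : ContDiff ℝ (⊤ : ℕ∞) C)
    (hD : ContDiff ℝ (⊤ : ℕ∞) D)
    (hIA : IsIA engel (fun x => ![A (p43 x), B (p43 x), C (p43 x), D x]))
    (E : (Fin 5 → ℝ) → ℝ) (hE : ContDiff ℝ (⊤ : ℕ∞) E) :
    (IsIA cartanE
        (fun x => ![A (p53 x), B (p53 x), C (p53 x), D (p54 x), E x]) ↔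
      ∀ x : Fin 5 → ℝ,
        E x = x 4 * (((pd 0 A (p53 x) + x 4 * pd 0 D (p54 x))
            - x 2 * (pd 1 A (p53 x) + x 4 * pd 1 D (p54 x))
            - x 3 * (pd 2 A (p53 x) + x 4 * pd 2 D (p54 x)))
            - pd 3 D (p54 x)))
    ∧ (∃! E' : (Fin 5 → ℝ) → ℝ, ContDiff ℝ (⊤ : ℕ∞) E' ∧
        IsIA cartanE
          (fun x => ![A (p53 x), B (p53 x), C (p53 x), D (p54 x), E' x])) := by
  refine ⟨key A B C D hA hB hC hD hIA E, ?_⟩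
  refine ⟨fun x => x 4 * (((pd 0 A (p53 x) + x 4 * pd 0 D (p54 x))
      - x 2 * (pd 1 A (p53 x) + x 4 * pd 1 D (p54 x))
      - x 3 * (pd 2 A (p53 x) + x 4 * pd 2 D (p54 x))) - pd 3 D (p54 x)), ⟨?_, ?_⟩, ?_⟩
  · have h35 : (3:ℕ) ≤ 5 := by norm_num
    have h45 : (4:ℕ) ≤ 5 := by norm_num
    have cx : ∀ i : Fin 5, ContDiff ℝ (⊤ : ℕ∞) (fun x : Fin 5 → ℝ => x i) := fun i =>
      (ContinuousLinearMap.proj i : (Fin 5 → ℝ) →L[ℝ] ℝ).contDiff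
    have pA : ∀ i : Fin 3, ContDiff ℝ (⊤ : ℕ∞) (fun x : Fin 5 → ℝ => pd i A (p53 x)) := fun i =>
      (pd_contDiff i A hA).comp (pcast h35).contDiff
    have pD : ∀ i : Fin 4, ContDiff ℝ (⊤ : ℕ∞) (fun x : Fin 5 → ℝ => pd i D (p54 x)) := fun i =>
      (pd_contDiff i D hD).comp (pcast h45).contDiff
    exact (cx 4).mul (((((pA 0).add ((cx 4).mul (pD 0))).sub
      ((cx 2).mul ((pA 1).add ((cx 4).mul (pD 1))))).sub
      ((cx 3).mul ((pA 2).add ((cx 4).mul (pD 2))))).sub (pD 3))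
  · exact (key A B C D hA hB hC hD hIA _).2 (fun x => rfl)
  · rintro E'' ⟨_, hIAE⟩
    funext x
    exact (key A B C D hA hB hC hD hIA E'').1 hIAE x
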